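/- If p ∈ ℝ[x₀,x₁,x₂] is homogeneous and hyperbolic with respect to every vector in the cone {(0,v₁,v₂) : v₁ > 0, v₂ > 0}, then the one-variable complex polynomial t ↦ p(1, t, i) has no zeros in the open upper half-plane: for every z ∈ ℂ with Im z > 0, p(1, z, i) ≠ 0. -/

import Mathlib

open MvPolynomial Polynomial

/-- The one-variable complex polynomial `t ↦ P(x - t·e)` for `P ∈ ℝ[x₀,…,x_{N-1}]`. -/
noncomputable def linePoly {N : ℕ} (p : MvPolynomial (Fin N) ℝ) (x e : Fin N → ℝ) :
    Polynomial ℂ :=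
  MvPolynomial.aeval (fun i => Polynomial.C (x i : ℂ) - Polynomial.C (e i : ℂ) * Polynomial.X) p

/-- A real multivariate polynomial is hyperbolic with respect to `e` if `p(e) ≠ 0` and for
every real `x` the one-variable polynomial `t ↦ p(x - t e)` has only real zeros. -/
def Hyperbolic {N : ℕ} (p : MvPolynomial (Fin N) ℝ) (e : Fin N → ℝ) : Prop :=
  MvPolynomial.eval e p ≠ 0 ∧ ∀ x : Fin N → ℝ, ∀ z ∈ (linePoly p x e).roots, z.im = 0

/-!
Write `z = a + b i` with `b > 0` and take `e = (0, b, 1)` in the cone and `x = (1, a, 0)`.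
Then `x - t e = (1, z, i)` at `t = -i`, so a zero of `p(1, ·, i)` at `z` is the non-real zero
`-i` of `t ↦ p(x - t e)`. That polynomial is nonzero because, `p` being homogeneous of degree
`d`, its coefficient of `t^d` is `p(-e) = (-1)^d p(e) ≠ 0`; so hyperbolicity in direction `e`
is contradicted.
-/

namespace Polynomial

variable {σ R : Type*} [CommSemiring R] (f : σ → R[X])

theorem natDegree_finsuppProd_pow_le (hf : ∀ i, (f i).natDegree ≤ 1) (m : σ →₀ ℕ) :
    (m.prod fun i k => f i ^ k).natDegree ≤ m.degree := by
  induction m using Finsupp.induction with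
  | zero => simp
  | single_add a n m _ _ ih =>
    rw [Finsupp.prod_add_index' (by simp) (fun _ _ _ => pow_add _ _ _),
      Finsupp.prod_single_index (by simp), map_add, Finsupp.degree_single]
    exact natDegree_mul_le.trans (add_le_add (by simpa using natDegree_pow_le_of_le n (hf a)) ih)

theorem coeff_finsuppProd_pow_degree (hf : ∀ i, (f i).natDegree ≤ 1) (m : σ →₀ ℕ) :
    (m.prod fun i k => f i ^ k).coeff m.degree = m.prod fun i k => (f i).coeff 1 ^ k := by
  induction m using Finsupp.induction with
  | zero => simp
  | single_add a n m _ _ ih =>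
    have hpow : (f a ^ n).natDegree ≤ n := by simpa using natDegree_pow_le_of_le n (hf a)
    rw [Finsupp.prod_add_index' (by simp) (fun _ _ _ => pow_add _ _ _),
      Finsupp.prod_add_index' (by simp) (fun _ _ _ => pow_add _ _ _), map_add,
      Finsupp.prod_single_index (by simp), Finsupp.prod_single_index (by simp),
      Finsupp.degree_single,
      coeff_mul_add_eq_of_natDegree_le hpow (natDegree_finsuppProd_pow_le f hf m), ih,
      ← coeff_pow_of_natDegree_le (hf a), mul_one]

end Polynomial

namespace MvPolynomial.IsHomogeneous

variable {σ R S : Type*} [CommSemiring R] [CommSemiring S] [Algebra R S]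
  {p : MvPolynomial σ R} {d : ℕ}

theorem coeff_aeval_of_natDegree_le_one (hp : p.IsHomogeneous d) (f : σ → S[X])
    (hf : ∀ i, (f i).natDegree ≤ 1) :
    (MvPolynomial.aeval f p).coeff d = MvPolynomial.aeval (fun i => (f i).coeff 1) p := by
  conv_lhs => rw [p.as_sum]
  conv_rhs => rw [p.as_sum]
  simp only [map_sum, finsetSum_coeff]
  refine Finset.sum_congr rfl fun m hm => ?_
  rw [hp.degree_eq_sum_deg_support hm, ← Finsupp.degree_apply, aeval_monomial, aeval_monomial,
    Polynomial.algebraMap_apply, Polynomial.coeff_C_mul, coeff_finsuppProd_pow_degree f hf]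

theorem aeval_smul (hp : p.IsHomogeneous d) (c : S) (v : σ → S) :
    MvPolynomial.aeval (c • v) p = c ^ d * MvPolynomial.aeval v p := by
  conv_lhs => rw [p.as_sum]
  conv_rhs => rw [p.as_sum]
  simp only [map_sum, Finset.mul_sum]
  refine Finset.sum_congr rfl fun m hm => ?_
  rw [hp.degree_eq_sum_deg_support hm, ← Finsupp.degree_apply, aeval_monomial, aeval_monomial]
  simp only [Pi.smul_apply, smul_eq_mul, mul_pow, Finsupp.prod_mul]
  rw [show (m.prod fun _ k => c ^ k) = c ^ m.degree from Finset.prod_pow_eq_pow_sum _ _ _]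
  ring

end MvPolynomial.IsHomogeneous

section linePoly

variable {N d : ℕ} {p : MvPolynomial (Fin N) ℝ}

theorem eval_linePoly (x e : Fin N → ℝ) (t : ℂ) :
    (linePoly p x e).eval t = MvPolynomial.aeval (fun i => (x i : ℂ) - e i * t) p := by
  rw [linePoly, ← Polynomial.coe_aeval_eq_eval, ← AlgHom.coe_restrictScalars' ℝ,
    ← AlgHom.comp_apply, MvPolynomial.comp_aeval]
  simp

theorem coeff_linePoly (hp : p.IsHomogeneous d) (x e : Fin N → ℝ) :
    (linePoly p x e).coeff d = (-1) ^ d * (MvPolynomial.eval e p : ℂ) := by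
  have hdeg (i : Fin N) :
      (Polynomial.C (x i : ℂ) - Polynomial.C (e i : ℂ) * Polynomial.X).natDegree ≤ 1 := by
    compute_degree
  have hcoeff :
      (fun i => (Polynomial.C (x i : ℂ) - Polynomial.C (e i : ℂ) * Polynomial.X).coeff 1) =
        (-1 : ℂ) • fun i => (e i : ℂ) := by
    ext i
    simp
  rw [linePoly, hp.coeff_aeval_of_natDegree_le_one _ hdeg, hcoeff, hp.aeval_smul]
  exact congrArg _ (eval₂_comp_left Complex.ofRealHom (RingHom.id ℝ) e p).symm

theorem linePoly_ne_zero (hp : p.IsHomogeneous d) {e : Fin N → ℝ}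
    (he : MvPolynomial.eval e p ≠ 0) (x : Fin N → ℝ) : linePoly p x e ≠ 0 := by
  intro h
  exact he (by simpa [h, eq_comm (a := (0 : ℂ))] using coeff_linePoly hp x e)

theorem Hyperbolic.im_eq_zero_of_aeval_eq_zero (hp : p.IsHomogeneous d) {e : Fin N → ℝ}
    (hyp : Hyperbolic p e) (x : Fin N → ℝ) {t : ℂ}
    (ht : MvPolynomial.aeval (fun i => (x i : ℂ) - e i * t) p = 0) : t.im = 0 :=
  hyp.2 x t <| (mem_roots (linePoly_ne_zero hp hyp.1 x)).2 <| by rwa [IsRoot, eval_linePoly]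

end linePoly

/-- If `p ∈ ℝ[x₀,x₁,x₂]` is homogeneous and hyperbolic with respect to every vector in the
cone `{(0,v₁,v₂) : v₁,v₂ > 0}`, then `t ↦ p(1,t,i)` has no zeros in the open upper
half-plane: for every `z ∈ ℂ` with `Im z > 0`, `p(1,z,i) ≠ 0`. -/
theorem hyperbolic_cone_no_upper_roots (d : ℕ) (p : MvPolynomial (Fin 3) ℝ)
    (hhom : p.IsHomogeneous d)
    (hhyp : ∀ v₁ v₂ : ℝ, 0 < v₁ → 0 < v₂ → Hyperbolic p ![0, v₁, v₂]) :
    ∀ z : ℂ, 0 < z.im → MvPolynomial.aeval ![(1 : ℂ), z, Complex.I] p ≠ 0 := by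
  intro z hz hzero
  set x : Fin 3 → ℝ := ![1, z.re, 0]
  set e : Fin 3 → ℝ := ![0, z.im, 1]
  have hline : (fun i => (x i : ℂ) - e i * -Complex.I) = ![1, z, Complex.I] := by
    funext i
    fin_cases i <;> simp [x, e]
  have him := (hhyp z.im 1 hz one_pos).im_eq_zero_of_aeval_eq_zero hhom x (hline ▸ hzero)
  simp at him
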